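/- arXiv:1904.01290 — 5 statements merged into one kernel-verified Lean document; each statement's English description precedes it below -/
import Mathlib

section
/- The two formulations of configuration typing coincide: Ψ ⊨ C :: Ψ' holds (using rules Proc, Id, Comp) if and only if Ψ ⊨' C :: Ψ' holds (using rules Empty and Extend, which build the configuration right-to-left one process at a time). -/
/-! # Adjoint session types: processes, configurations, typing (Figure 1),
and the multiset-rewriting operational semantics (Figure 2). -/

/-- Propositions (session types) of adjoint logic.  `atom m p` is an atomic
proposition `p_m`; `oplus m n f` / `withT m n f` are `n`-ary internal/external
choice at mode `m`; `up m A` is `↑_{A.mode}^m A` and `down m A` is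
`↓_m^{A.mode} A`. -/
inductive Typ (Mode : Type) : Type where
  | atom   : Mode → ℕ → Typ Mode
  | lolli  : Typ Mode → Typ Mode → Typ Mode
  | tensor : Typ Mode → Typ Mode → Typ Mode
  | one    : Mode → Typ Mode
  | oplus  : Mode → (n : ℕ) → (Fin n → Typ Mode) → Typ Mode
  | withT  : Mode → (n : ℕ) → (Fin n → Typ Mode) → Typ Mode
  | up     : Mode → Typ Mode → Typ Mode
  | down   : Mode → Typ Mode → Typ Mode

variable {Mode : Type}

/-- The mode of a session type. -/
def Typ.mode : Typ Mode → Mode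
  | .atom m _ => m
  | .lolli _ B => B.mode
  | .tensor A _ => A.mode
  | .one m => m
  | .oplus m _ _ => m
  | .withT m _ _ => m
  | .up m _ => m
  | .down m _ => m

/-- `m ≥ k` implies `σ(m) ⊇ σ(k)`:  `sW m` / `sC m` say that mode `m` admits
weakening / contraction. -/
def SigmaMono [Preorder Mode] (sW sC : Mode → Prop) : Prop :=
  ∀ m k : Mode, k ≤ m → (sW k → sW m) ∧ (sC k → sC m)

/-- `Compat sW sC n m` is the condition `n ~ m`: `0 ~ m` iff `W ∈ σ(m)`,
`1 ~ m` always, and `n ~ m` for `n ≥ 2` iff `C ∈ σ(m)`. -/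
def Compat (sW sC : Mode → Prop) (n : ℕ) (m : Mode) : Prop :=
  (n = 0 → sW m) ∧ (2 ≤ n → sC m)

/-- Process expressions (the proof terms of Figure 1).  Channels are natural
numbers.
* `fwd c a`               is `c ← a` (identify `c` and `a`; provides `c`);
* `spawn S x P Q`         is `S ← (νx)P; Q`;
* `sendLabel c ℓ a`       is `c.ℓ(a)` (also used for `&L⁰`: `a.ℓ(c)`);
* `caseLabel c n xs Ps`   is `case c (i(xs i) ⇒ Ps i)_{i < n}`;
* `sendPair c a b`        is `c.⟨a, b⟩`;
* `casePair c x y P`      is `case c (⟨x, y⟩ ⇒ P)`;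
* `sendUnit c`            is `c.⟨⟩`;
* `caseUnit c P`          is `case c (⟨⟩ ⇒ P)`;
* `sendShift c a`         is `c.shift(a)`;
* `caseShift c x P`       is `case c (shift(x) ⇒ P)`. -/
inductive Proc : Type where
  | fwd : ℕ → ℕ → Proc
  | spawn : Finset ℕ → ℕ → Proc → Proc → Proc
  | sendLabel : ℕ → ℕ → ℕ → Proc
  | caseLabel : ℕ → (n : ℕ) → (Fin n → ℕ) → (Fin n → Proc) → Proc
  | sendPair : ℕ → ℕ → ℕ → Proc
  | casePair : ℕ → ℕ → ℕ → Proc → Proc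
  | sendUnit : ℕ → Proc
  | caseUnit : ℕ → Proc → Proc
  | sendShift : ℕ → ℕ → Proc
  | caseShift : ℕ → ℕ → Proc → Proc

/-- Apply a renaming of channel names throughout a process. -/
def Proc.rename (ρ : ℕ → ℕ) : Proc → Proc
  | .fwd c a => .fwd (ρ c) (ρ a)
  | .spawn S x P Q => .spawn (S.image ρ) (ρ x) (P.rename ρ) (Q.rename ρ)
  | .sendLabel c l a => .sendLabel (ρ c) l (ρ a)
  | .caseLabel c n xs Ps => .caseLabel (ρ c) n (fun i => ρ (xs i)) (fun i => (Ps i).rename ρ)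
  | .sendPair c a b => .sendPair (ρ c) (ρ a) (ρ b)
  | .casePair c x y P => .casePair (ρ c) (ρ x) (ρ y) (P.rename ρ)
  | .sendUnit c => .sendUnit (ρ c)
  | .caseUnit c P => .caseUnit (ρ c) (P.rename ρ)
  | .sendShift c a => .sendShift (ρ c) (ρ a)
  | .caseShift c x P => .caseShift (ρ c) (ρ x) (P.rename ρ)

/-- `P.subst c b` is `P[c/b]`: replace channel `b` by channel `c`. -/
def Proc.subst (P : Proc) (c b : ℕ) : Proc :=
  P.rename (fun z => if z = b then c else z)

/-- The free channels of a process. -/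
def Proc.fv : Proc → Finset ℕ
  | .fwd c a => {c, a}
  | .spawn S x P Q => (P.fv \ {x}) ∪ (Q.fv \ S)
  | .sendLabel c _ a => {c, a}
  | .caseLabel c n xs Ps =>
      insert c (Finset.univ.biUnion (fun i : Fin n => (Ps i).fv \ {xs i}))
  | .sendPair c a b => {c, a, b}
  | .casePair c x y P => insert c (P.fv \ {x, y})
  | .sendUnit c => {c}
  | .caseUnit c P => insert c P.fv
  | .sendShift c a => {c, a}
  | .caseShift c x P => insert c (P.fv \ {x})

/-- A semantic object `proc(S, Δ, a, P)`: a running process `P` providing the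
channel internally named `a` under the set of external aliases `S`, and using
the channels `Δ`. -/
structure PObj : Type where
  clients : Finset ℕ
  used : Finset ℕ
  name : ℕ
  proc : Proc

/-- A configuration is a multiset of semantic objects. -/
abbrev Config : Type := Multiset PObj

/-- Typing contexts for processes/configurations: channels with their types. -/
abbrev PCtx (Mode : Type) : Type := Multiset (ℕ × Typ Mode)

/-- The presupposition `Ψ ≥ m` (the declaration of independence). -/
def PCtxGE [Preorder Mode] (Ψ : PCtx Mode) (m : Mode) : Prop :=
  ∀ p ∈ Ψ, m ≤ (Prod.snd p).mode

/-- The set of channels declared in a context. -/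
def chanSet (Ψ : PCtx Mode) : Finset ℕ := (Ψ.map Prod.fst).toFinset

/-- `(S : A_m)`: the context declaring each alias in `S` at type `A`. -/
def sCtx (S : Finset ℕ) (A : Typ Mode) : PCtx Mode := S.val.map (fun c => (c, A))

section
variable [Preorder Mode]

/-- The process typing judgment `Ψ ⊢ P :: (c : A)` of Figure 1. -/
inductive ProcTyped (sW sC : Mode → Prop) : PCtx Mode → Proc → ℕ → Typ Mode → Prop where
  | id : ∀ (a c : ℕ) (A : Typ Mode),
      ProcTyped sW sC {(a, A)} (.fwd c a) c A
  | cut : ∀ {Ψ Ψ' : PCtx Mode} {S : Finset ℕ} {x c : ℕ} {P Q : Proc} {A C : Typ Mode},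
      PCtxGE Ψ A.mode → C.mode ≤ A.mode → Compat sW sC S.card A.mode →
      ProcTyped sW sC Ψ P x A → ProcTyped sW sC (sCtx S A + Ψ') Q c C →
      ProcTyped sW sC (Ψ + Ψ') (.spawn S x P Q) c C
  | oplusR0 : ∀ {m : Mode} {n : ℕ} {f : Fin n → Typ Mode} (ℓ : Fin n) (a c : ℕ),
      ProcTyped sW sC {(a, f ℓ)} (.sendLabel c ℓ.val a) c (.oplus m n f)
  | oplusL : ∀ {Ψ : PCtx Mode} {m : Mode} {n : ℕ} {f : Fin n → Typ Mode}
      {B : Typ Mode} {a c : ℕ} (xs : Fin n → ℕ) (Ps : Fin n → Proc),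
      (∀ i, ProcTyped sW sC ((xs i, f i) ::ₘ Ψ) (Ps i) c B) →
      ProcTyped sW sC ((a, Typ.oplus m n f) ::ₘ Ψ) (.caseLabel a n xs Ps) c B
  | withR : ∀ {Ψ : PCtx Mode} {m : Mode} {n : ℕ} {f : Fin n → Typ Mode}
      {c : ℕ} (xs : Fin n → ℕ) (Ps : Fin n → Proc),
      (∀ i, ProcTyped sW sC Ψ (Ps i) (xs i) (f i)) →
      ProcTyped sW sC Ψ (.caseLabel c n xs Ps) c (.withT m n f)
  | withL0 : ∀ {m : Mode} {n : ℕ} {f : Fin n → Typ Mode} (ℓ : Fin n) (a c : ℕ),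
      ProcTyped sW sC {(a, Typ.withT m n f)} (.sendLabel a ℓ.val c) c (f ℓ)
  | tensorR0 : ∀ {A B : Typ Mode} (a b c : ℕ),
      ProcTyped sW sC {(a, A), (b, B)} (.sendPair c a b) c (.tensor A B)
  | tensorL : ∀ {Ψ : PCtx Mode} {A B D : Typ Mode} {a x y c : ℕ} {P : Proc},
      ProcTyped sW sC ((x, A) ::ₘ (y, B) ::ₘ Ψ) P c D →
      ProcTyped sW sC ((a, Typ.tensor A B) ::ₘ Ψ) (.casePair a x y P) c D
  | oneR : ∀ (m : Mode) (c : ℕ), ProcTyped sW sC 0 (.sendUnit c) c (.one m)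
  | oneL : ∀ {Ψ : PCtx Mode} {m : Mode} {B : Typ Mode} {a c : ℕ} {P : Proc},
      ProcTyped sW sC Ψ P c B →
      ProcTyped sW sC ((a, Typ.one m) ::ₘ Ψ) (.caseUnit a P) c B
  | lolliR : ∀ {Ψ : PCtx Mode} {A B : Typ Mode} {x y c : ℕ} {P : Proc},
      ProcTyped sW sC ((x, A) ::ₘ Ψ) P y B →
      ProcTyped sW sC Ψ (.casePair c x y P) c (.lolli A B)
  | lolliL0 : ∀ {A B : Typ Mode} (a b c : ℕ),
      ProcTyped sW sC {(a, A), (c, Typ.lolli A B)} (.sendPair c a b) b B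
  | upR : ∀ {Ψ : PCtx Mode} {m : Mode} {A : Typ Mode} {x c : ℕ} {P : Proc},
      ProcTyped sW sC Ψ P x A →
      ProcTyped sW sC Ψ (.caseShift c x P) c (.up m A)
  | upL0 : ∀ {m : Mode} {A : Typ Mode} (a c : ℕ),
      ProcTyped sW sC {(a, Typ.up m A)} (.sendShift a c) c A
  | downR0 : ∀ {m : Mode} {A : Typ Mode} (a c : ℕ),
      ProcTyped sW sC {(a, A)} (.sendShift c a) c (.down m A)
  | downL : ∀ {Ψ : PCtx Mode} {m : Mode} {A D : Typ Mode} {a x c : ℕ} {P : Proc},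
      ProcTyped sW sC ((x, A) ::ₘ Ψ) P c D →
      ProcTyped sW sC ((a, Typ.down m A) ::ₘ Ψ) (.caseShift a x P) c D

/-- The configuration typing judgment `Ψ ⊨ C :: Ψ'` (rules Proc, Id, Comp). -/
inductive ConfigTyped (sW sC : Mode → Prop) : PCtx Mode → Config → PCtx Mode → Prop where
  | id : ∀ {Ψ : PCtx Mode}, ConfigTyped sW sC Ψ 0 Ψ
  | comp : ∀ {Ψ Ψ' Ψ'' : PCtx Mode} {C₁ C₂ : Config},
      ConfigTyped sW sC Ψ C₁ Ψ' → ConfigTyped sW sC Ψ' C₂ Ψ'' →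
      ConfigTyped sW sC Ψ (C₁ + C₂) Ψ''
  | proc : ∀ {Ψ Ψ' : PCtx Mode} {S : Finset ℕ} {a : ℕ} {P : Proc} {A : Typ Mode},
      Compat sW sC S.card A.mode → ProcTyped sW sC Ψ' P a A →
      ConfigTyped sW sC (Ψ + Ψ') {⟨S, chanSet Ψ', a, P⟩} (Ψ + sCtx S A)

end

/-- All channel names mentioned by an object. -/
def objNames (o : PObj) : Finset ℕ := o.clients ∪ o.used ∪ insert o.name o.proc.fv

/-- All channel names mentioned in a configuration. -/
def confNames (Cfg : Config) : Finset ℕ := (Cfg.map objNames).sup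

/-- The multiset-rewriting operational semantics (Figure 2).  Each rule
rewrites the indicated objects and leaves the rest of the configuration
(the frame `F`) untouched; `cut`, `drop` and `copy` choose globally fresh
names for the newly created channels. -/
inductive Step : Config → Config → Prop where
  | id : ∀ {T Δ S : Finset ℕ} {x y c : ℕ} {P : Proc} {F : Config},
      c ∉ T →
      Step ((⟨insert c T, Δ, x, P⟩ : PObj) ::ₘ (⟨S, {c}, y, .fwd y c⟩ : PObj) ::ₘ F)
           ((⟨T ∪ S, Δ, x, P⟩ : PObj) ::ₘ F)
  | cut : ∀ {T S S' ΔP ΔQ : Finset ℕ} {x y : ℕ} {P Q : Proc} {F : Config} (ρ : ℕ → ℕ),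
      S' = S.image ρ → Set.InjOn ρ ↑S →
      Disjoint S' (confNames ((⟨T, ΔP ∪ ΔQ, y, .spawn S x P Q⟩ : PObj) ::ₘ F)) →
      ΔP = P.fv \ {x} → ΔQ = Q.fv \ (insert y S) →
      Step ((⟨T, ΔP ∪ ΔQ, y, .spawn S x P Q⟩ : PObj) ::ₘ F)
           ((⟨S', ΔP, x, P⟩ : PObj) ::ₘ
            (⟨T, ΔQ ∪ S', y, Q.rename (fun z => if z ∈ S then ρ z else z)⟩ : PObj) ::ₘ F)
  | drop : ∀ {Δ : Finset ℕ} {x : ℕ} {P : Proc} {F : Config} (y : ℕ → ℕ),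
      (∀ c a, P ≠ .fwd c a) →
      Set.InjOn y ↑Δ →
      Disjoint (Δ.image y) (confNames ((⟨∅, Δ, x, P⟩ : PObj) ::ₘ F)) →
      Step ((⟨∅, Δ, x, P⟩ : PObj) ::ₘ F)
           (Δ.val.map (fun b => (⟨∅, {b}, y b, .fwd (y b) b⟩ : PObj)) + F)
  | copy : ∀ {S T Δ : Finset ℕ} {x : ℕ} {P : Proc} {F : Config} (ρ₁ ρ₂ y : ℕ → ℕ),
      S.Nonempty → T.Nonempty → Disjoint S T →
      (∀ c a, P ≠ .fwd c a) →
      Set.InjOn ρ₁ ↑Δ → Set.InjOn ρ₂ ↑Δ → Set.InjOn y ↑Δ →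
      (∀ b ∈ Δ, ∀ b' ∈ Δ, ρ₁ b ≠ ρ₂ b' ∧ y b ≠ ρ₁ b' ∧ y b ≠ ρ₂ b') →
      Disjoint (Δ.image ρ₁ ∪ Δ.image ρ₂ ∪ Δ.image y)
        (confNames ((⟨S ∪ T, Δ, x, P⟩ : PObj) ::ₘ F)) →
      Step ((⟨S ∪ T, Δ, x, P⟩ : PObj) ::ₘ F)
           (Δ.val.map (fun b => (⟨{ρ₁ b, ρ₂ b}, {b}, y b, .fwd (y b) b⟩ : PObj)) +
            ((⟨S, Δ.image ρ₁, x, P.rename (fun z => if z ∈ Δ then ρ₁ z else z)⟩ : PObj) ::ₘ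
             (⟨T, Δ.image ρ₂, x, P.rename (fun z => if z ∈ Δ then ρ₂ z else z)⟩ : PObj) ::ₘ F))
  | oplusC : ∀ {S Δ : Finset ℕ} {b c x z : ℕ} {n : ℕ} (ℓ : Fin n)
      (xs : Fin n → ℕ) (Ps : Fin n → Proc) {F : Config},
      b ∉ Δ →
      Step ((⟨{b}, {c}, x, .sendLabel x ℓ.val c⟩ : PObj) ::ₘ
            (⟨S, insert b Δ, z, .caseLabel b n xs Ps⟩ : PObj) ::ₘ F)
           ((⟨S, insert c Δ, z, (Ps ℓ).subst c (xs ℓ)⟩ : PObj) ::ₘ F)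
  | withC : ∀ {Δ : Finset ℕ} {b c x z : ℕ} {n : ℕ} (ℓ : Fin n)
      (xs : Fin n → ℕ) (Ps : Fin n → Proc) {F : Config},
      Step ((⟨{b}, Δ, x, .caseLabel x n xs Ps⟩ : PObj) ::ₘ
            (⟨{c}, {b}, z, .sendLabel b ℓ.val z⟩ : PObj) ::ₘ F)
           ((⟨{c}, Δ, z, (Ps ℓ).subst z (xs ℓ)⟩ : PObj) ::ₘ F)
  | tensorC : ∀ {S Δ : Finset ℕ} {b c d w x y z : ℕ} {P : Proc} {F : Config},
      b ∉ Δ →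
      Step ((⟨{b}, {c, d}, w, .sendPair w c d⟩ : PObj) ::ₘ
            (⟨S, insert b Δ, z, .casePair b x y P⟩ : PObj) ::ₘ F)
           ((⟨S, insert c (insert d Δ), z, (P.subst c x).subst d y⟩ : PObj) ::ₘ F)
  | lolliC : ∀ {Δ : Finset ℕ} {b c d w x y z : ℕ} {P : Proc} {F : Config},
      Step ((⟨{b}, Δ, w, .casePair w x y P⟩ : PObj) ::ₘ
            (⟨{c}, {b, d}, z, .sendPair b d z⟩ : PObj) ::ₘ F)
           ((⟨{c}, insert d Δ, z, (P.subst d x).subst z y⟩ : PObj) ::ₘ F)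
  | oneC : ∀ {S Δ : Finset ℕ} {b x y : ℕ} {P : Proc} {F : Config},
      b ∉ Δ →
      Step ((⟨{b}, ∅, x, .sendUnit x⟩ : PObj) ::ₘ
            (⟨S, insert b Δ, y, .caseUnit b P⟩ : PObj) ::ₘ F)
           ((⟨S, Δ, y, P⟩ : PObj) ::ₘ F)
  | downC : ∀ {S Δ : Finset ℕ} {b c x y z : ℕ} {P : Proc} {F : Config},
      b ∉ Δ →
      Step ((⟨{b}, {c}, x, .sendShift x c⟩ : PObj) ::ₘ
            (⟨S, insert b Δ, y, .caseShift b z P⟩ : PObj) ::ₘ F)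
           ((⟨S, insert c Δ, y, P.subst c z⟩ : PObj) ::ₘ F)
  | upC : ∀ {Δ : Finset ℕ} {b c x y z : ℕ} {P : Proc} {F : Config},
      Step ((⟨{b}, Δ, x, .caseShift x z P⟩ : PObj) ::ₘ
            (⟨{c}, {b}, y, .sendShift b y⟩ : PObj) ::ₘ F)
           ((⟨{c}, Δ, y, P.subst y z⟩ : PObj) ::ₘ F)

/-- `P` sends on channel `a`. -/
def Proc.sendsOn (P : Proc) (a : ℕ) : Prop :=
  match P with
  | .sendLabel c _ _ => c = a
  | .sendPair c _ _ => c = a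
  | .sendUnit c => c = a
  | .sendShift c _ => c = a
  | _ => False

/-- `P` receives on channel `a`. -/
def Proc.recvsOn (P : Proc) (a : ℕ) : Prop :=
  match P with
  | .caseLabel c _ _ _ => c = a
  | .casePair c _ _ _ => c = a
  | .caseUnit c _ => c = a
  | .caseShift c _ _ => c = a
  | _ => False

/-- An object `proc(S, Δ, a, P)` is poised on `a` if `P` sends or receives
on its offered channel `a`. -/
def PObj.Poised (o : PObj) : Prop :=
  o.proc.sendsOn o.name ∨ o.proc.recvsOn o.name

/-- The right-to-left formulation `Ψ ⊨' C :: Ψ'` of configuration typing,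
given by rules Empty and Extend. -/
inductive ConfigTyped' {Mode : Type} [Preorder Mode] (sW sC : Mode → Prop) :
    PCtx Mode → Config → PCtx Mode → Prop where
  | empty : ∀ {Ψ : PCtx Mode}, ConfigTyped' sW sC Ψ 0 Ψ
  | extend : ∀ {Ψ Ψ' Ψ'' : PCtx Mode} {C : Config} {S : Finset ℕ} {a : ℕ}
      {P : Proc} {A : Typ Mode},
      Compat sW sC S.card A.mode →
      ConfigTyped' sW sC Ψ C (Ψ' + Ψ'') →
      ProcTyped sW sC Ψ' P a A →
      ConfigTyped' sW sC Ψ ((⟨S, chanSet Ψ', a, P⟩ : PObj) ::ₘ C) (Ψ'' + sCtx S A)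

private theorem configTyped'_comp {Mode : Type} [Preorder Mode]
    {sW sC : Mode → Prop} {Ψ Ψ' Ψ'' : PCtx Mode} {C₁ C₂ : Config}
    (h₁ : ConfigTyped' sW sC Ψ C₁ Ψ')
    (h₂ : ConfigTyped' sW sC Ψ' C₂ Ψ'') :
    ConfigTyped' sW sC Ψ (C₁ + C₂) Ψ'' := by
  induction h₂ with
  | empty => simpa using h₁
  | extend hc hC hP ih =>
    have := ConfigTyped'.extend hc ih hP
    simpa [Multiset.add_cons] using this

/-- **Lemma 1**: the two formulations of configuration typing coincide:
`Ψ ⊨ C :: Ψ'` (rules Proc, Id, Comp) iff `Ψ ⊨' C :: Ψ'` (rules Empty,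
Extend). -/
theorem configTyped_iff_configTyped' {Mode : Type} [Preorder Mode]
    (sW sC : Mode → Prop) (hσ : SigmaMono sW sC)
    {Ψ Ψ' : PCtx Mode} {C : Config} :
    ConfigTyped sW sC Ψ C Ψ' ↔ ConfigTyped' sW sC Ψ C Ψ' := by
  constructor
  · intro h
    induction h with
    | id => exact ConfigTyped'.empty
    | comp _ _ ih₁ ih₂ => exact configTyped'_comp ih₁ ih₂
    | @proc Ψ Ψ' S a P A hc hP =>
      have h0 : ConfigTyped' sW sC (Ψ + Ψ') (0 : Config) (Ψ' + Ψ) := by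
        rw [add_comm]; exact ConfigTyped'.empty
      simpa using ConfigTyped'.extend hc h0 hP
  · intro h
    induction h with
    | empty => exact ConfigTyped.id
    | @extend Ψ' Ψ'' C S a P A hc hC hP ih =>
      have hp : ConfigTyped sW sC (Ψ' + Ψ'') {(⟨S, chanSet Ψ', a, P⟩ : PObj)}
          (Ψ'' + sCtx S A) := by
        rw [add_comm Ψ' Ψ'']
        exact ConfigTyped.proc hc hP
      have := ConfigTyped.comp ih hp
      rwa [show C + {(⟨S, chanSet Ψ', a, P⟩ : PObj)} = (⟨S, chanSet Ψ', a, P⟩ : PObj) ::ₘ C from by rw [add_comm, Multiset.singleton_add]] at this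
end

section
/- The composition rule is admissible for the right-to-left configuration typing judgment ⊨': if Ψ ⊨' C :: Ψ' and Ψ' ⊨' C' :: Ψ'', then Ψ ⊨' C C' :: Ψ''. -/
variable {Mode : Type}

/-- The composition rule is admissible for the right-to-left configuration
typing judgment `⊨'`: if `Ψ ⊨' C :: Ψ'` and `Ψ' ⊨' C' :: Ψ''`, then
`Ψ ⊨' C C' :: Ψ''`. -/
theorem configTyped'_comp_admissible {Mode : Type} [Preorder Mode]
    (sW sC : Mode → Prop) (hσ : SigmaMono sW sC)
    {Ψ Ψ' Ψ'' : PCtx Mode} {C C' : Config}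
    (h₁ : ConfigTyped' sW sC Ψ C Ψ') (h₂ : ConfigTyped' sW sC Ψ' C' Ψ'') :
    ConfigTyped' sW sC Ψ (C + C') Ψ'' := by
  induction h₂ with
  | empty => simpa using h₁
  | extend hc _ hp ih =>
      rw [Multiset.add_cons]
      exact ConfigTyped'.extend hc ih hp
end

section
/- Identity Expansion: if Ψ ⊢ A_m is derivable in adjoint logic, then there exists a derivation of Ψ ⊢ A_m in which the identity rule is used only at atomic propositions; moreover, this derivation is cut-free whenever the original derivation is cut-free. -/
variable {Mode : Type}

section
variable [Preorder Mode]

/-- Well-formed propositions: the components of each (non-shift) connective are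
at the same mode, `↑_k^m` requires `m ≥ k` and `↓_m^ℓ` requires `ℓ ≥ m`. -/
inductive Typ.WF : Typ Mode → Prop where
  | atom   : ∀ (m : Mode) (p : ℕ), Typ.WF (.atom m p)
  | lolli  : ∀ {A B : Typ Mode}, A.mode = B.mode → A.WF → B.WF → Typ.WF (.lolli A B)
  | tensor : ∀ {A B : Typ Mode}, A.mode = B.mode → A.WF → B.WF → Typ.WF (.tensor A B)
  | one    : ∀ (m : Mode), Typ.WF (.one m)
  | oplus  : ∀ {m : Mode} {n : ℕ} {f : Fin n → Typ Mode},
      (∀ i, (f i).mode = m) → (∀ i, (f i).WF) → Typ.WF (.oplus m n f)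
  | withT  : ∀ {m : Mode} {n : ℕ} {f : Fin n → Typ Mode},
      (∀ i, (f i).mode = m) → (∀ i, (f i).WF) → Typ.WF (.withT m n f)
  | up     : ∀ {m : Mode} {A : Typ Mode}, A.mode ≤ m → A.WF → Typ.WF (.up m A)
  | down   : ∀ {m : Mode} {A : Typ Mode}, m ≤ A.mode → A.WF → Typ.WF (.down m A)

/-- `CtxGE Ψ m` is the presupposition `Ψ ≥ m`: every antecedent mode is `≥ m`. -/
def CtxGE (Ψ : Multiset (Typ Mode)) (m : Mode) : Prop := ∀ A ∈ Ψ, m ≤ A.mode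

end

section
variable [Preorder Mode]

/-- The sequent calculus of adjoint logic (Figure 6).  Contexts are multisets
of propositions (exchange is built in; variable labels are suppressed).
The first `Bool` index is `true` iff the rule `cut` may be used; the second
`Bool` index is `true` iff the identity rule may be used on arbitrary
propositions (it is always available on atomic propositions). -/
inductive Deriv (sW sC : Mode → Prop) : Bool → Bool → Multiset (Typ Mode) → Typ Mode → Prop where
  | idAtom : ∀ {cu idf : Bool} (m : Mode) (p : ℕ),
      Deriv sW sC cu idf {Typ.atom m p} (Typ.atom m p)
  | id : ∀ {cu : Bool} {A : Typ Mode}, Deriv sW sC cu true {A} A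
  | cut : ∀ {idf : Bool} {Ψ Ψ' : Multiset (Typ Mode)} {A B : Typ Mode},
      CtxGE Ψ A.mode → B.mode ≤ A.mode →
      Deriv sW sC true idf Ψ A → Deriv sW sC true idf (A ::ₘ Ψ') B →
      Deriv sW sC true idf (Ψ + Ψ') B
  | weaken : ∀ {cu idf : Bool} {Ψ : Multiset (Typ Mode)} {A B : Typ Mode},
      sW A.mode → Deriv sW sC cu idf Ψ B → Deriv sW sC cu idf (A ::ₘ Ψ) B
  | contract : ∀ {cu idf : Bool} {Ψ : Multiset (Typ Mode)} {A B : Typ Mode},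
      sC A.mode → Deriv sW sC cu idf (A ::ₘ A ::ₘ Ψ) B →
      Deriv sW sC cu idf (A ::ₘ Ψ) B
  | oplusR : ∀ {cu idf : Bool} {Ψ : Multiset (Typ Mode)} {m : Mode} {n : ℕ}
      {f : Fin n → Typ Mode} (ℓ : Fin n),
      Deriv sW sC cu idf Ψ (f ℓ) → Deriv sW sC cu idf Ψ (.oplus m n f)
  | oplusL : ∀ {cu idf : Bool} {Ψ : Multiset (Typ Mode)} {m : Mode} {n : ℕ}
      {f : Fin n → Typ Mode} {B : Typ Mode},
      (∀ i, Deriv sW sC cu idf (f i ::ₘ Ψ) B) →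
      Deriv sW sC cu idf (Typ.oplus m n f ::ₘ Ψ) B
  | withR : ∀ {cu idf : Bool} {Ψ : Multiset (Typ Mode)} {m : Mode} {n : ℕ}
      {f : Fin n → Typ Mode},
      (∀ i, Deriv sW sC cu idf Ψ (f i)) → Deriv sW sC cu idf Ψ (.withT m n f)
  | withL : ∀ {cu idf : Bool} {Ψ : Multiset (Typ Mode)} {m : Mode} {n : ℕ}
      {f : Fin n → Typ Mode} {B : Typ Mode} (ℓ : Fin n),
      Deriv sW sC cu idf (f ℓ ::ₘ Ψ) B →
      Deriv sW sC cu idf (Typ.withT m n f ::ₘ Ψ) B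
  | tensorR : ∀ {cu idf : Bool} {Ψ Ψ' : Multiset (Typ Mode)} {A B : Typ Mode},
      Deriv sW sC cu idf Ψ A → Deriv sW sC cu idf Ψ' B →
      Deriv sW sC cu idf (Ψ + Ψ') (.tensor A B)
  | tensorL : ∀ {cu idf : Bool} {Ψ : Multiset (Typ Mode)} {A B D : Typ Mode},
      Deriv sW sC cu idf (A ::ₘ B ::ₘ Ψ) D →
      Deriv sW sC cu idf (Typ.tensor A B ::ₘ Ψ) D
  | oneR : ∀ {cu idf : Bool} (m : Mode), Deriv sW sC cu idf 0 (.one m)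
  | oneL : ∀ {cu idf : Bool} {Ψ : Multiset (Typ Mode)} {m : Mode} {B : Typ Mode},
      Deriv sW sC cu idf Ψ B → Deriv sW sC cu idf (Typ.one m ::ₘ Ψ) B
  | lolliR : ∀ {cu idf : Bool} {Ψ : Multiset (Typ Mode)} {A B : Typ Mode},
      Deriv sW sC cu idf (A ::ₘ Ψ) B → Deriv sW sC cu idf Ψ (.lolli A B)
  | lolliL : ∀ {cu idf : Bool} {Ψ Ψ' : Multiset (Typ Mode)} {A B D : Typ Mode},
      CtxGE Ψ' A.mode → Deriv sW sC cu idf Ψ' A → Deriv sW sC cu idf (B ::ₘ Ψ) D →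
      Deriv sW sC cu idf (Typ.lolli A B ::ₘ (Ψ + Ψ')) D
  | upR : ∀ {cu idf : Bool} {Ψ : Multiset (Typ Mode)} {m : Mode} {A : Typ Mode},
      Deriv sW sC cu idf Ψ A → Deriv sW sC cu idf Ψ (.up m A)
  | upL : ∀ {cu idf : Bool} {Ψ : Multiset (Typ Mode)} {m : Mode} {A B : Typ Mode},
      B.mode ≤ A.mode → Deriv sW sC cu idf (A ::ₘ Ψ) B →
      Deriv sW sC cu idf (Typ.up m A ::ₘ Ψ) B
  | downR : ∀ {cu idf : Bool} {Ψ : Multiset (Typ Mode)} {m : Mode} {A : Typ Mode},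
      CtxGE Ψ A.mode → Deriv sW sC cu idf Ψ A → Deriv sW sC cu idf Ψ (.down m A)
  | downL : ∀ {cu idf : Bool} {Ψ : Multiset (Typ Mode)} {m : Mode} {A B : Typ Mode},
      Deriv sW sC cu idf (A ::ₘ Ψ) B →
      Deriv sW sC cu idf (Typ.down m A ::ₘ Ψ) B

end

/-- Identity expansion at a single proposition: `{A} ⊢ A` is derivable
using the identity rule only at atoms. -/
lemma expand_id {Mode : Type} [Preorder Mode] (sW sC : Mode → Prop) {cu : Bool} :
    ∀ (A : Typ Mode), Deriv sW sC cu false {A} A := by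
  intro A
  induction A with
  | atom m p => exact Deriv.idAtom m p
  | lolli A B ihA ihB =>
      apply Deriv.lolliR
      rw [show (A ::ₘ {Typ.lolli A B}) = (Typ.lolli A B ::ₘ ((0 : Multiset (Typ Mode)) + {A}))
        from Multiset.cons_swap _ _ _]
      exact Deriv.lolliL (fun X hX => by
          simp at hX; subst hX; exact le_refl _) ihA (by simpa using ihB)
  | tensor A B ihA ihB =>
      apply Deriv.tensorL
      rw [show (A ::ₘ B ::ₘ (0 : Multiset (Typ Mode))) = ({A} + {B}) from by
        simp [Multiset.singleton_add]]
      exact Deriv.tensorR ihA ihB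
  | one m => exact Deriv.oneL (Deriv.oneR m)
  | oplus m n f ih =>
      exact Deriv.oplusL (fun i => Deriv.oplusR i (by simpa using ih i))
  | withT m n f ih =>
      exact Deriv.withR (fun i => Deriv.withL i (by simpa using ih i))
  | up m A ihA =>
      exact Deriv.upR (Deriv.upL (le_refl _) (by simpa using ihA))
  | down m A ihA =>
      apply Deriv.downL
      apply Deriv.downR (fun X hX => by simp at hX; subst hX; exact le_refl _)
      simpa using ihA

/-- Identity expansion, for an arbitrary identity flag. -/
lemma identity_expansion_aux {Mode : Type} [Preorder Mode] (sW sC : Mode → Prop)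
    {Ψ : Multiset (Typ Mode)} {A : Typ Mode} {cu idf : Bool}
    (h : Deriv sW sC cu idf Ψ A) : Deriv sW sC cu false Ψ A := by
  induction h with
  | idAtom m p => exact Deriv.idAtom m p
  | id => exact expand_id sW sC _
  | cut h1 h2 _ _ ih1 ih2 => exact Deriv.cut h1 h2 ih1 ih2
  | weaken hw _ ih => exact Deriv.weaken hw ih
  | contract hc _ ih => exact Deriv.contract hc ih
  | oplusR ℓ _ ih => exact Deriv.oplusR ℓ ih
  | oplusL _ ih => exact Deriv.oplusL ih
  | withR _ ih => exact Deriv.withR ih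
  | withL ℓ _ ih => exact Deriv.withL ℓ ih
  | tensorR _ _ ih1 ih2 => exact Deriv.tensorR ih1 ih2
  | tensorL _ ih => exact Deriv.tensorL ih
  | oneR m => exact Deriv.oneR m
  | oneL _ ih => exact Deriv.oneL ih
  | lolliR _ ih => exact Deriv.lolliR ih
  | lolliL hge _ _ ih1 ih2 => exact Deriv.lolliL hge ih1 ih2
  | upR _ ih => exact Deriv.upR ih
  | upL hle _ ih => exact Deriv.upL hle ih
  | downR hge _ ih => exact Deriv.downR hge ih
  | downL _ ih => exact Deriv.downL ih

/-- **Identity Expansion** (Theorem, Appendix A): if `Ψ ⊢ A_m` is derivable in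
adjoint logic, then there is a derivation of `Ψ ⊢ A_m` using the identity rule
only at atomic propositions; moreover it is cut-free whenever the original
derivation is (the flag `cu` recording the use of cut is preserved). -/
theorem identity_expansion {Mode : Type} [Preorder Mode] (sW sC : Mode → Prop)
    (hσ : SigmaMono sW sC) {Ψ : Multiset (Typ Mode)} {A : Typ Mode}
    (hwfA : A.WF) (hwfΨ : ∀ B ∈ Ψ, Typ.WF B) (hpre : CtxGE Ψ A.mode)
    {cu : Bool} (h : Deriv sW sC cu true Ψ A) :
    Deriv sW sC cu false Ψ A := by
  exact identity_expansion_aux sW sC h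
end

section
/- For every proposition A_m of adjoint logic, there is a cut-free derivation of the sequent (x : A_m) ⊢ A_m that uses the identity rule only at atomic propositions. -/
variable {Mode : Type}

/-- For every proposition `A_m` of adjoint logic there is a cut-free derivation
of `(x : A_m) ⊢ A_m` that uses the identity rule only at atomic propositions. -/
theorem identity_expansion_at_type {Mode : Type} [Preorder Mode] (sW sC : Mode → Prop)
    (hσ : SigmaMono sW sC) {A : Typ Mode} (hwfA : A.WF) :
    Deriv sW sC false false {A} A := by
  induction hwfA with
  | atom m p => exact .idAtom m p
  | @lolli A B hm _ _ ihA ihB =>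
      apply Deriv.lolliR
      have : (Typ.lolli A B ::ₘ {A} : Multiset (Typ Mode))
          = Typ.lolli A B ::ₘ ((0 : Multiset (Typ Mode)) + {A}) := by simp
      have h : A ::ₘ ({Typ.lolli A B} : Multiset (Typ Mode))
          = Typ.lolli A B ::ₘ ((0 : Multiset (Typ Mode)) + {A}) := by
        simp only [zero_add]; exact Multiset.cons_swap _ _ _
      rw [h]
      exact Deriv.lolliL (fun X hX => by simp at hX; subst hX; exact le_refl _) ihA ihB
  | @tensor A B hm _ _ ihA ihB =>
      apply Deriv.tensorL
      have h : (A ::ₘ B ::ₘ (0 : Multiset (Typ Mode)))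
          = ({A} : Multiset (Typ Mode)) + {B} := by rfl
      rw [h]
      exact Deriv.tensorR ihA ihB
  | one m => exact Deriv.oneL (Deriv.oneR m)
  | @oplus m n f hm _ ih =>
      exact Deriv.oplusL (fun i => Deriv.oplusR i (ih i))
  | @withT m n f hm _ ih =>
      exact Deriv.withR (fun i => Deriv.withL i (ih i))
  | @up m A hle _ ih =>
      exact Deriv.upR (Deriv.upL (le_refl _) ih)
  | @down m A hle _ ih =>
      exact Deriv.downL (Deriv.downR
        (fun X hX => by simp at hX; subst hX; exact le_refl _) ih)
end

section
/- In the asynchronous (axiomatic) reformulation of the adjoint sequent calculus, in which every non-invertible rule (⊕R, 1R, ⊗R, ↓R, &L, ⊸L, ↑L) is replaced by a zero-premise axiom, the sequent · ⊢ 1_m ⊕ 1_m has no cut-free proof. -/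
variable {Mode : Type}

/-- The asynchronous (axiomatic) reformulation of the adjoint sequent calculus
(Figure 1 of the paper, at the level of sequents): every non-invertible rule
(`⊕R`, `1R`, `⊗R`, `↓R`, `&L`, `⊸L`, `↑L`) is a zero-premise axiom, the
invertible rules (`⊕L`, `&R`, `⊗L`, `1L`, `⊸R`, `↑R`, `↓L`) keep their
premises, and the judgmental rules are identity and multicut.  The `Bool`
index is `true` iff the multicut rule may be used; a proof is cut-free iff it
is derivable with index `false`. -/
inductive DerivAsync {Mode : Type} [Preorder Mode] (sW sC : Mode → Prop) :
    Bool → Multiset (Typ Mode) → Typ Mode → Prop where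
  | id : ∀ {cu : Bool} {A : Typ Mode}, DerivAsync sW sC cu {A} A
  | mcut : ∀ {Ψ Ψ' : Multiset (Typ Mode)} {A B : Typ Mode} {n : ℕ},
      CtxGE Ψ A.mode → B.mode ≤ A.mode → Compat sW sC n A.mode →
      DerivAsync sW sC true Ψ A →
      DerivAsync sW sC true (Multiset.replicate n A + Ψ') B →
      DerivAsync sW sC true (Ψ + Ψ') B
  | oplusR0 : ∀ {cu : Bool} {m : Mode} {n : ℕ} {f : Fin n → Typ Mode} (ℓ : Fin n),
      DerivAsync sW sC cu {f ℓ} (.oplus m n f)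
  | oplusL : ∀ {cu : Bool} {Ψ : Multiset (Typ Mode)} {m : Mode} {n : ℕ}
      {f : Fin n → Typ Mode} {B : Typ Mode},
      (∀ i, DerivAsync sW sC cu (f i ::ₘ Ψ) B) →
      DerivAsync sW sC cu (Typ.oplus m n f ::ₘ Ψ) B
  | withR : ∀ {cu : Bool} {Ψ : Multiset (Typ Mode)} {m : Mode} {n : ℕ}
      {f : Fin n → Typ Mode},
      (∀ i, DerivAsync sW sC cu Ψ (f i)) → DerivAsync sW sC cu Ψ (.withT m n f)
  | withL0 : ∀ {cu : Bool} {m : Mode} {n : ℕ} {f : Fin n → Typ Mode} (ℓ : Fin n),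
      DerivAsync sW sC cu {Typ.withT m n f} (f ℓ)
  | tensorR0 : ∀ {cu : Bool} {A B : Typ Mode},
      DerivAsync sW sC cu {A, B} (.tensor A B)
  | tensorL : ∀ {cu : Bool} {Ψ : Multiset (Typ Mode)} {A B D : Typ Mode},
      DerivAsync sW sC cu (A ::ₘ B ::ₘ Ψ) D →
      DerivAsync sW sC cu (Typ.tensor A B ::ₘ Ψ) D
  | oneR : ∀ {cu : Bool} (m : Mode), DerivAsync sW sC cu 0 (.one m)
  | oneL : ∀ {cu : Bool} {Ψ : Multiset (Typ Mode)} {m : Mode} {B : Typ Mode},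
      DerivAsync sW sC cu Ψ B → DerivAsync sW sC cu (Typ.one m ::ₘ Ψ) B
  | lolliR : ∀ {cu : Bool} {Ψ : Multiset (Typ Mode)} {A B : Typ Mode},
      DerivAsync sW sC cu (A ::ₘ Ψ) B → DerivAsync sW sC cu Ψ (.lolli A B)
  | lolliL0 : ∀ {cu : Bool} {A B : Typ Mode},
      DerivAsync sW sC cu {A, Typ.lolli A B} B
  | upR : ∀ {cu : Bool} {Ψ : Multiset (Typ Mode)} {m : Mode} {A : Typ Mode},
      DerivAsync sW sC cu Ψ A → DerivAsync sW sC cu Ψ (.up m A)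
  | upL0 : ∀ {cu : Bool} {m : Mode} {A : Typ Mode},
      DerivAsync sW sC cu {Typ.up m A} A
  | downR0 : ∀ {cu : Bool} {m : Mode} {A : Typ Mode},
      DerivAsync sW sC cu {A} (.down m A)
  | downL : ∀ {cu : Bool} {Ψ : Multiset (Typ Mode)} {m : Mode} {A B : Typ Mode},
      DerivAsync sW sC cu (A ::ₘ Ψ) B →
      DerivAsync sW sC cu (Typ.down m A ::ₘ Ψ) B

/-- In the asynchronous (axiomatic) reformulation of the adjoint sequent
calculus, the sequent `· ⊢ 1_m ⊕ 1_m` has no cut-free proof. -/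
theorem no_cutfree_proof_of_one_oplus_one {Mode : Type} [Preorder Mode]
    (sW sC : Mode → Prop) (hσ : SigmaMono sW sC) (m : Mode) :
    ¬ DerivAsync sW sC false 0 (Typ.oplus m 2 (fun _ => Typ.one m)) := by
  intro h
  generalize hb : false = b at h
  generalize hΨ : (0 : Multiset (Typ Mode)) = Ψ at h
  generalize hC : (Typ.oplus m 2 (fun _ => Typ.one m)) = C at h
  induction h with
  | mcut => exact absurd hb (by simp)
  | withR _ ih => cases hC
  | _ =>
      exfalso
      simp_all [Multiset.insert_eq_cons, ← Multiset.cons_zero]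
end
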